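/- Cut-off determinacy: every register protocol P, with any initial register value d0 and any target location qf, admits a cut-off for almost-sure reachability; that is, there exists k ∈ ℕ such that either for all h ≥ k, Post*({⟨q0^h, d0⟩}) ⊆ Pre*([qf]) (positive cut-off: qf is reached almost surely for all systems of at least k processes), or for all h ≥ k, Post*({⟨q0^h, d0⟩}) ⊄ Pre*([qf]) (negative cut-off: qf is reached with probability strictly less than 1 for all systems of at least k processes). -/

import Mathlib

/-!
Two "copycat" properties drive the proof. A run from `γ` can be replayed with extra processes
on locations occupied in `γ`, each extra process imitating one that moves; conversely, any extra
processes on locations occupied at the end of a run arise in this way from equally many extra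
processes on locations occupied at its start. Hence `Pre*([qf])` is upward closed for `⪯`.

If some `δ` reachable from `q0^|δ|` has an occupied location `a` such that no `δ + a^m` lies in
`Pre*([qf])`, the second property yields the negative cut-off `|δ|`. Otherwise there is a positive
cut-off: if not, there would be arbitrarily large reachable configurations outside `Pre*([qf])`;
as `⪯` is a well-quasi-order (pigeonhole on register and support, Dickson on the multisets), they
contain an increasing sequence along which some location `a` is unbounded, and its first element
would be such a `δ`.
-/

/-- Operation type of a register protocol: read or write. -/
inductive Op : Type
  | R : Op
  | W : Op
deriving DecidableEq

instance : Fintype Op := ⟨{Op.R, Op.W}, fun x => by cases x <;> simp⟩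

/-- A location has at least one outgoing transition. -/
def Nonblock {Q D : Type*} (T : Set (Q × Op × D × Q)) : Prop :=
  ∀ q : Q, ∃ op d q', (q, op, d, q') ∈ T

/-- Whenever a read transition exists from `q`, reads of every datum are enabled in `q`. -/
def ReadTotal {Q D : Type*} (T : Set (Q × Op × D × Q)) : Prop :=
  ∀ q d' q', (q, Op.R, d', q') ∈ T → ∀ d : D, ∃ qd, (q, Op.R, d, qd) ∈ T

/-- One step of the distributed system associated with transition set `T`:
a configuration is a pair of a finite multiset of locations and a register datum. -/
def IsStep {Q D : Type*} [DecidableEq Q] (T : Set (Q × Op × D × Q)) :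
    Multiset Q × D → Multiset Q × D → Prop := fun γ γ' =>
  ∃ q op d'' q', (q, op, d'', q') ∈ T ∧ q ∈ γ.1 ∧
    γ'.1 = γ.1 - {q} + {q'} ∧
    ((op = Op.R ∧ γ.2 = d'' ∧ γ'.2 = d'') ∨ (op = Op.W ∧ γ'.2 = d''))

/-- Reachability: reflexive-transitive closure of the step relation. -/
def Reach {Q D : Type*} [DecidableEq Q] (T : Set (Q × Op × D × Q)) :
    Multiset Q × D → Multiset Q × D → Prop :=
  Relation.ReflTransGen (IsStep T)

/-- `PostStar T S` is the set of configurations reachable from some configuration of `S`. -/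
def PostStar {Q D : Type*} [DecidableEq Q] (T : Set (Q × Op × D × Q))
    (S : Set (Multiset Q × D)) : Set (Multiset Q × D) :=
  {γ' | ∃ γ ∈ S, Reach T γ γ'}

/-- `PreStar T S` is the set of configurations from which some configuration of `S`
is reachable. -/
def PreStar {Q D : Type*} [DecidableEq Q] (T : Set (Q × Op × D × Q))
    (S : Set (Multiset Q × D)) : Set (Multiset Q × D) :=
  {γ | ∃ γ' ∈ S, Reach T γ γ'}

/-- `[qf]`: configurations containing at least one process in location `qf`. -/
def TargetSet {Q D : Type*} [DecidableEq Q] (qf : Q) : Set (Multiset Q × D) :=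
  {γ | 0 < γ.1.count qf}

/-- The order `⪯` on configurations: same register content, same support,
and componentwise smaller multiset. -/
def ConfLE {Q D : Type*} [DecidableEq Q] (γ γ' : Multiset Q × D) : Prop :=
  γ.2 = γ'.2 ∧ γ.1.toFinset = γ'.1.toFinset ∧ γ.1 ≤ γ'.1

/-- Upward closure of a set of configurations with respect to `⪯`. -/
def UpSet {Q D : Type*} [DecidableEq Q] (B : Set (Multiset Q × D)) :
    Set (Multiset Q × D) :=
  {γ' | ∃ γ ∈ B, ConfLE γ γ'}

open Multiset

theorem Multiset.filter_ne_add_replicate_count {α : Type*} [DecidableEq α] (s : Multiset α)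
    (a : α) : s.filter (· ≠ a) + replicate (s.count a) a = s := by
  rw [← filter_eq', add_comm, filter_add_not]

section Copycat

variable {Q D : Type*} [DecidableEq Q] {T : Set (Q × Op × D × Q)}

theorem IsStep.card_eq {γ γ' : Multiset Q × D} (h : IsStep T γ γ') :
    card γ'.1 = card γ.1 := by
  obtain ⟨q, -, -, q', -, hq, hγ', -⟩ := h
  rw [hγ', card_add, card_singleton, sub_singleton, card_erase_add_one hq]

theorem Reach.card_eq {γ γ' : Multiset Q × D} (h : Reach T γ γ') : card γ'.1 = card γ.1 := by
  induction h with
  | refl => rfl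
  | tail _ hs ih => rw [hs.card_eq, ih]

theorem IsStep.add_right {γ γ' : Multiset Q × D} (h : IsStep T γ γ') (μ : Multiset Q) :
    IsStep T (γ.1 + μ, γ.2) (γ'.1 + μ, γ'.2) := by
  obtain ⟨q, op, d, q', ht, hq, hγ', hreg⟩ := h
  refine ⟨q, op, d, q', ht, mem_add.2 (.inl hq), ?_, hreg⟩
  rw [hγ', sub_singleton, sub_singleton, erase_add_left_pos μ hq, add_right_comm]

/-- Once a transition has fired, its datum is in the register, so it may fire again. -/
theorem reach_add_replicate {q q' : Q} {op : Op} {d : D} (ht : (q, op, d, q') ∈ T)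
    (μ : Multiset Q) (c : ℕ) : Reach T (μ + replicate c q, d) (μ + replicate c q', d) := by
  induction c generalizing μ with
  | zero => exact .refl
  | succ c ih =>
    have hstep : IsStep T (μ + replicate (c + 1) q, d) (μ + {q'} + replicate c q, d) := by
      refine ⟨q, op, d, q', ht, by simp, ?_, by cases op <;> simp⟩
      rw [replicate_succ, ← singleton_add, sub_singleton, add_left_comm, erase_add_left_pos _
        (mem_singleton_self q), erase_singleton, zero_add, add_right_comm]
    have hrest : Reach T (μ + {q'} + replicate c q, d) (μ + {q'} + replicate c q', d) :=
      ih (μ + {q'})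
    have htarget : μ + {q'} + replicate c q' = μ + replicate (c + 1) q' := by
      rw [replicate_succ, ← singleton_add, add_assoc]
    exact htarget ▸ Relation.ReflTransGen.head hstep hrest

theorem IsStep.exists_reach_add_replicate {β γ : Multiset Q × D} (h : IsStep T β γ) :
    ∃ q q', q ∈ β.1 ∧ γ.1 = β.1 - {q} + {q'} ∧ ∀ (μ : Multiset Q) (c : ℕ),
      Reach T (β.1 + μ + replicate c q, β.2) (γ.1 + μ + replicate c q', γ.2) := by
  obtain ⟨q, op, d, q', ht, hq, hγ, hreg⟩ := h
  have hd : γ.2 = d := by rcases hreg with ⟨-, -, h⟩ | ⟨-, h⟩ <;> exact h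
  refine ⟨q, q', hq, hγ, fun μ c => .head ?_ (hd ▸ reach_add_replicate ht (γ.1 + μ) c)⟩
  simpa only [add_assoc] using
    IsStep.add_right (γ := β) (γ' := γ) ⟨q, op, d, q', ht, hq, hγ, hreg⟩ (μ + replicate c q)

theorem Reach.exists_reach_add_of_subset_source {γ γ' : Multiset Q × D} (h : Reach T γ γ')
    {ε : Multiset Q} (hε : ε ⊆ γ.1) :
    ∃ ε' ⊆ γ'.1, Reach T (γ.1 + ε, γ.2) (γ'.1 + ε', γ'.2) := by
  induction h with
  | refl => exact ⟨ε, hε, .refl⟩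
  | @tail β γ' _ hs ih =>
    obtain ⟨E, hE, hr⟩ := ih
    obtain ⟨q, q', -, hγ', hpump⟩ := hs.exists_reach_add_replicate
    refine ⟨E.filter (· ≠ q) + replicate (E.count q) q', fun r hr => ?_, hr.trans ?_⟩
    · rw [hγ', sub_singleton]
      rcases mem_add.1 hr with hr | hr
      · obtain ⟨hrE, hrq⟩ := mem_filter.1 hr
        exact mem_add.2 (.inl ((mem_erase_of_ne hrq).2 (hE hrE)))
      · simp [eq_of_mem_replicate hr]
    · have := hpump (E.filter (· ≠ q)) (E.count q)
      rwa [add_assoc, add_assoc, filter_ne_add_replicate_count] at this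

theorem Reach.exists_reach_add_of_subset_target {γ γ' : Multiset Q × D} (h : Reach T γ γ')
    {ε' : Multiset Q} (hε' : ε' ⊆ γ'.1) :
    ∃ ε ⊆ γ.1, card ε = card ε' ∧ Reach T (γ.1 + ε, γ.2) (γ'.1 + ε', γ'.2) := by
  induction h generalizing ε' with
  | refl => exact ⟨ε', hε', rfl, .refl⟩
  | @tail β γ' _ hs ih =>
    obtain ⟨q, q', hq, hγ', hpump⟩ := hs.exists_reach_add_replicate
    have hsub : ε'.filter (· ≠ q') + replicate (ε'.count q') q ⊆ β.1 := by
      intro r hr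
      rcases mem_add.1 hr with hr | hr
      · obtain ⟨hrε, hrq'⟩ := mem_filter.1 hr
        have hrγ := hε' hrε
        rw [hγ', sub_singleton, mem_add, mem_singleton] at hrγ
        exact hrγ.elim mem_of_mem_erase (absurd · hrq')
      · rwa [eq_of_mem_replicate hr]
    have hcard : card (ε'.filter (· ≠ q') + replicate (ε'.count q') q) = card ε' := by
      conv_rhs => rw [← filter_ne_add_replicate_count ε' q']
      simp only [card_add, card_replicate]
    obtain ⟨ε, hε, hεcard, hr⟩ := ih hsub
    refine ⟨ε, hε, hεcard.trans hcard, hr.trans ?_⟩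
    have := hpump (ε'.filter (· ≠ q')) (ε'.count q')
    rwa [add_assoc, add_assoc, filter_ne_add_replicate_count] at this

theorem mem_preStar_targetSet_of_confLE {qf : Q} {γ γ' : Multiset Q × D} (hle : ConfLE γ γ')
    (h : γ ∈ PreStar T (TargetSet qf)) : γ' ∈ PreStar T (TargetSet qf) := by
  obtain ⟨hd, hsupp, hle⟩ := hle
  obtain ⟨γt, hγt, hreach⟩ := h
  have hsub : γ'.1 - γ.1 ⊆ γ.1 := fun r hr => by
    rw [← mem_toFinset, hsupp, mem_toFinset]
    exact mem_of_le tsub_le_self hr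
  obtain ⟨ε', -, hr⟩ := hreach.exists_reach_add_of_subset_source hsub
  refine ⟨(γt.1 + ε', γt.2), ?_, ?_⟩
  · show 0 < count qf (γt.1 + ε')
    exact count_add qf γt.1 ε' ▸ Nat.lt_add_right _ hγt
  · rwa [add_tsub_cancel_of_le hle, hd] at hr

end Copycat

instance Multiset.wellQuasiOrderedLE {α : Type*} [Finite α] :
    WellQuasiOrderedLE (Multiset α) := by
  classical exact Finsupp.orderIsoMultiset.wellQuasiOrderedLE_iff.1 inferInstance

theorem Multiset.exists_forall_le_count_of_forall_le_card {α : Type*} [Finite α] [DecidableEq α]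
    {s : ℕ → Multiset α} (hs : ∀ n, n ≤ card (s n)) : ∃ a, ∀ m, ∃ n, m ≤ (s n).count a := by
  by_contra! hbound
  choose B hB using hbound
  cases nonempty_fintype α
  have hcard : card (s (∑ a, B a + 1)) ≤ ∑ a, B a := by
    rw [← sum_count_eq_card fun a _ => Finset.mem_univ a]
    exact Finset.sum_le_sum fun a _ => (hB a _).le
  have := hs (∑ a, B a + 1)
  omega

section WellQuasiOrder

variable {Q D : Type*} [DecidableEq Q]

instance : IsPreorder (Multiset Q × D) ConfLE where
  refl _ := ⟨rfl, rfl, le_rfl⟩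
  trans _ _ _ h h' := ⟨h.1.trans h'.1, h.2.1.trans h'.2.1, h.2.2.trans h'.2.2⟩

theorem wellQuasiOrdered_confLE [Finite Q] [Finite D] :
    WellQuasiOrdered (ConfLE : Multiset Q × D → Multiset Q × D → Prop) := by
  intro f
  obtain ⟨m, n, hmn, hle, heq⟩ := (wellQuasiOrdered_le.prod (Finite.wellQuasiOrdered (· = ·)))
    fun i => ((f i).1, ((f i).2, (f i).1.toFinset))
  exact ⟨m, n, hmn, congrArg Prod.fst heq, congrArg Prod.snd heq, hle⟩

theorem exists_confLE_add_replicate_of_unbounded [Finite Q] [Finite D]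
    {S : Set (Multiset Q × D)} (hS : ∀ n, ∃ γ ∈ S, n ≤ card γ.1) :
    ∃ δ ∈ S, ∃ a ∈ δ.1, ∀ m, ∃ γ ∈ S, ConfLE (δ.1 + replicate m a, δ.2) γ := by
  choose F hFS hFcard using hS
  obtain ⟨g, hg⟩ := wellQuasiOrdered_confLE.exists_monotone_subseq F
  obtain ⟨a, ha⟩ := exists_forall_le_count_of_forall_le_card (s := fun n => (F (g n)).1)
    fun n => (g.strictMono.id_le n).trans (hFcard (g n))
  set δ := F (g 0)
  have hpump : ∀ m, ∃ n, ConfLE (δ.1 + replicate m a, δ.2) (F (g n)) := by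
    intro m
    obtain ⟨n, hn⟩ := ha (δ.1.count a + m)
    obtain ⟨hd, hsupp, hle⟩ := hg 0 n n.zero_le
    have hle' : δ.1 + replicate m a ≤ (F (g n)).1 := by
      refine le_iff_count.2 fun r => ?_
      rw [count_add, count_replicate]
      split_ifs with hr
      · exact hr ▸ hn
      · simpa using count_le_of_le r hle
    refine ⟨n, hd, le_antisymm ?_ ?_, hle'⟩
    · exact toFinset_subset.2 (subset_of_le hle')
    · exact hsupp ▸ toFinset_subset.2 (subset_of_le (le_add_right le_rfl))
  have ha : a ∈ δ.1 := by
    obtain ⟨n, -, hsupp, -⟩ := hpump 1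
    rw [← mem_toFinset, (hg 0 n n.zero_le).2.1, ← hsupp]
    simp
  refine ⟨δ, hFS _, a, ha, fun m => ?_⟩
  obtain ⟨n, hn⟩ := hpump m
  exact ⟨F (g n), hFS _, hn⟩

end WellQuasiOrder

section Cutoff

variable {Q D : Type*} [DecidableEq Q] {T : Set (Q × Op × D × Q)} {q0 : Q} {d0 : D}

theorem mem_postStar_replicate_iff {h : ℕ} {δ : Multiset Q × D} :
    δ ∈ PostStar T {(replicate h q0, d0)} ↔
      card δ.1 = h ∧ Reach T (replicate (card δ.1) q0, d0) δ := by
  constructor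
  · rintro ⟨_, rfl, hreach⟩
    have hcard : card δ.1 = h := by simpa using hreach.card_eq
    exact ⟨hcard, hcard ▸ hreach⟩
  · rintro ⟨rfl, hreach⟩
    exact ⟨_, rfl, hreach⟩

theorem not_postStar_subset_of_forall_add_replicate_notMem {B : Set (Multiset Q × D)}
    {δ : Multiset Q × D} {a : Q} (hreach : Reach T (replicate (card δ.1) q0, d0) δ)
    (ha : a ∈ δ.1) (hbad : ∀ m, (δ.1 + replicate m a, δ.2) ∉ B) {h : ℕ} (hh : card δ.1 ≤ h) :
    ¬ PostStar T {(replicate h q0, d0)} ⊆ B := by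
  obtain ⟨ε, hε, hcard, hr⟩ := hreach.exists_reach_add_of_subset_target
    (ε' := replicate (h - card δ.1) a) fun r hr => eq_of_mem_replicate hr ▸ ha
  have hε : ε = replicate (h - card δ.1) q0 :=
    eq_replicate.2 ⟨by simpa using hcard, fun b hb => eq_of_mem_replicate (hε hb)⟩
  have hinit : replicate (card δ.1) q0 + ε = replicate h q0 := by
    rw [hε, ← replicate_add, Nat.add_sub_cancel' hh]
  exact fun hsub => hbad _ (hsub ⟨_, rfl, hinit ▸ hr⟩)

theorem exists_forall_postStar_subset [Finite Q] [Finite D] {B : Set (Multiset Q × D)}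
    (hB : ∀ γ γ', ConfLE γ γ' → γ ∈ B → γ' ∈ B)
    (hpump : ∀ δ : Multiset Q × D, Reach T (replicate (card δ.1) q0, d0) δ →
      ∀ a ∈ δ.1, ∃ m, (δ.1 + replicate m a, δ.2) ∈ B) :
    ∃ k, ∀ h, k ≤ h → PostStar T {(replicate h q0, d0)} ⊆ B := by
  by_contra! hcut
  obtain ⟨δ, ⟨hreach, -⟩, a, ha, hbad⟩ := exists_confLE_add_replicate_of_unbounded
    (S := {δ | Reach T (replicate (card δ.1) q0, d0) δ ∧ δ ∉ B}) fun n => by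
      obtain ⟨h, hnh, hsub⟩ := hcut n
      obtain ⟨δ, hδ, hδB⟩ := Set.not_subset.1 hsub
      obtain ⟨hcard, hreach⟩ := mem_postStar_replicate_iff.1 hδ
      exact ⟨δ, ⟨hreach, hδB⟩, hcard ▸ hnh⟩
  obtain ⟨m, hm⟩ := hpump δ hreach a ha
  obtain ⟨γ, ⟨-, hγB⟩, hle⟩ := hbad m
  exact hγB (hB _ _ hle hm)

end Cutoff

theorem stmt_9_general {Q D : Type*} [Fintype Q] [Fintype D] [DecidableEq Q]
    (T : Set (Q × Op × D × Q))
    (q0 qf : Q) (d0 : D) :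
    ∃ k : ℕ,
      (∀ h : ℕ, k ≤ h →
        PostStar T {(Multiset.replicate h q0, d0)} ⊆ PreStar T (TargetSet qf)) ∨
      (∀ h : ℕ, k ≤ h →
        ¬ PostStar T {(Multiset.replicate h q0, d0)} ⊆ PreStar T (TargetSet qf)) := by
  by_cases hpump : ∀ δ : Multiset Q × D, Reach T (replicate (card δ.1) q0, d0) δ →
      ∀ a ∈ δ.1, ∃ m, (δ.1 + replicate m a, δ.2) ∈ PreStar T (TargetSet qf)
  · obtain ⟨k, hk⟩ := exists_forall_postStar_subset
      (fun _ _ => mem_preStar_targetSet_of_confLE) hpump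
    exact ⟨k, .inl hk⟩
  · push Not at hpump
    obtain ⟨δ, hreach, a, ha, hbad⟩ := hpump
    exact ⟨card δ.1, .inr fun _ =>
      not_postStar_subset_of_forall_add_replicate_notMem hreach ha hbad⟩

/-- cut-off determinacy: every register protocol, with any initial
register value `d0` and target `qf`, admits a cut-off: some `k` such that either
for all `h ≥ k` the target is reached almost surely (`Post* ⊆ Pre*`), or for all
`h ≥ k` it is not. -/
theorem stmt_9 {Q D : Type*} [Fintype Q] [Fintype D] [DecidableEq Q]
    (T : Set (Q × Op × D × Q)) (hnb : Nonblock T) (hrt : ReadTotal T)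
    (q0 qf : Q) (d0 : D) :
    ∃ k : ℕ,
      (∀ h : ℕ, k ≤ h →
        PostStar T {(Multiset.replicate h q0, d0)} ⊆ PreStar T (TargetSet qf)) ∨
      (∀ h : ℕ, k ≤ h →
        ¬ PostStar T {(Multiset.replicate h q0, d0)} ⊆ PreStar T (TargetSet qf)) :=
  stmt_9_general T q0 qf d0
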